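/- Let n ≥ 2 be a natural number and consider the word (k aⁿ)ⁿ, i.e., the list of letters consisting of n consecutive blocks k a a … a (each block one letter k followed by n letters a), which is freely reduced and has length n(n+1). If this list is written as a concatenation w₁ w₂ … w_l of l lists with l² ≤ n, then at least one of the lists w_j contains k aⁿ k (one letter k, followed by n letters a, followed by one letter k) as a contiguous sublist. -/

import Mathlib

/-!
Pigeonhole: since `l² ≤ n`, the `l` pieces cannot all have length at most `2n + 1`, as then
`l (2n + 1) < n (n + 1)`. A window of length `2n + 2` in `(k aⁿ)ⁿ` contains a block boundary
within its first `n + 1` letters, and the `n + 2` letters from there on spell `k aⁿ k`.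
-/

namespace List

variable {α : Type*}

theorem infix_of_append_eq_append {p₁ w s₁ p₂ v s₂ : List α}
    (h : p₁ ++ w ++ s₁ = p₂ ++ v ++ s₂) (hp : p₁.length ≤ p₂.length)
    (hv : p₂.length + v.length ≤ p₁.length + w.length) : v <:+: w := by
  obtain ⟨r, rfl⟩ : p₁ <+: p₂ :=
    prefix_of_prefix_length_le (h ▸ prefix_append_of_prefix (prefix_append ..))
      (prefix_append_of_prefix (prefix_append ..)) hp
  simp only [append_assoc, append_cancel_left_eq] at h
  have hrv : r ++ v <+: w := by
    refine prefix_of_prefix_length_le (l₃ := w ++ s₁) ?_ (prefix_append ..) ?_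
    · rw [h, ← append_assoc]; exact prefix_append ..
    · simp only [length_append] at hv ⊢; omega
  exact (suffix_append r v).isInfix.trans hrv.isInfix

theorem length_flatten_replicate (m : ℕ) (b : List α) :
    (replicate m b).flatten.length = m * b.length := by
  simp [length_flatten]

theorem cons_replicate_append_infix_of_long_infix {x y : α} {m n : ℕ} {w : List α}
    (hw : w <:+: (replicate m (x :: replicate n y)).flatten) (hlen : 2 * n + 2 ≤ w.length) :
    x :: (replicate n y ++ [x]) <:+: w := by
  obtain ⟨p, s, h⟩ := hw
  -- `i` counts the blocks that end before the first block starting inside `w`.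
  obtain ⟨i, hi_ge, hi_le⟩ : ∃ i, p.length ≤ i * (n + 1) ∧ i * (n + 1) ≤ p.length + n := by
    refine ⟨(p.length + n) / (n + 1), ?_, Nat.div_mul_le_self _ _⟩
    have := Nat.lt_div_mul_add (a := p.length + n) (b := n + 1) (by omega)
    omega
  have htotal : p.length + w.length + s.length = m * (n + 1) := by
    simpa [add_assoc] using congrArg length h
  obtain ⟨j, rfl⟩ : ∃ j, m = i + 2 + j := by
    refine ⟨m - i - 2, ?_⟩
    by_contra! hm
    have : m * (n + 1) ≤ (i + 1) * (n + 1) := Nat.mul_le_mul_right _ (by omega)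
    nlinarith
  have hsplit : (replicate (i + 2 + j) (x :: replicate n y)).flatten =
      (replicate i (x :: replicate n y)).flatten ++ x :: (replicate n y ++ [x]) ++
        (replicate n y ++ (replicate j (x :: replicate n y)).flatten) := by
    simp [replicate_add]
  refine infix_of_append_eq_append (h.trans hsplit) ?_ ?_ <;>
    simp only [length_flatten_replicate, length_cons, length_append, length_replicate,
      length_nil] <;> omega

end List

open List

theorem piece_contains_kank (n : ℕ) (hn : 2 ≤ n) (ws : List (List (Fin 2)))
    (hflat : ws.flatten = (List.replicate n ((0 : Fin 2) :: List.replicate n 1)).flatten)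
    (hl : ws.length ^ 2 ≤ n) :
    ∃ w ∈ ws, ∃ p s : List (Fin 2),
      w = p ++ ((0 : Fin 2) :: (List.replicate n 1 ++ [0])) ++ s := by
  have hpieces : ws.length * (2 * n + 1) < n * (n + 1) := by
    generalize ws.length = l at hl ⊢
    rcases l with _ | _ | l
    · nlinarith
    · nlinarith
    · have : 2 * (l + 2) ≤ n := by nlinarith
      nlinarith
  obtain ⟨w, hw, hlong⟩ : ∃ w ∈ ws, 2 * n + 1 < w.length := by
    refine exists_lt_of_sum_lt (fun _ => 2 * n + 1) length ?_
    rw [← length_flatten, hflat, length_flatten_replicate]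
    simpa using hpieces
  obtain ⟨p, s, hkank⟩ :=
    cons_replicate_append_infix_of_long_infix (hflat ▸ infix_of_mem_flatten hw) hlong
  exact ⟨w, hw, p, s, hkank.symm⟩
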